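/- arXiv:1903.02782 — 10 statements merged into one kernel-verified Lean document; each statement's English description precedes it below -/
import Mathlib

section
/- Let (X,r,μ) be an ultra-metric measure space, let 0 < δ ≤ h, let (τ_i^h)_{i=1,…,n(h)} be a family of closed h-representatives and (τ_j^δ)_{j=1,…,n(δ)} a family of closed δ-representatives. Then there is a partition {I_i}_{i=1,…,n(h)} of the index set {1,…,n(δ)} such that μ(B̄(τ_i^h,h)) = ∑_{j∈I_i} μ(B̄(τ_j^δ,δ)) for every i = 1,…,n(h). -/
open MeasureTheory Metric

/-- The support of a Borel measure on a metric space: the set of points all of whose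
open neighborhoods have positive measure. -/
def msupp {X : Type*} [MetricSpace X] [MeasurableSpace X] (μ : Measure X) : Set X :=
  {x | ∀ ε : ℝ, 0 < ε → 0 < μ (ball x ε)}

/-- A family of closed `h`-representatives: points of the support whose closed `h`-balls are
pairwise `μ`-disjoint and together carry the total mass of `μ`. -/
def IsClosedRepFamily {X : Type*} [MetricSpace X] [MeasurableSpace X]
    (μ : Measure X) (h : ℝ) {ι : Type*} (τ : ι → X) : Prop :=
  (∀ i, τ i ∈ msupp μ) ∧
  (∀ i j : ι, i ≠ j → μ (closedBall (τ i) h ∩ closedBall (τ j) h) = 0) ∧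
  (∑' i, μ (closedBall (τ i) h) = μ Set.univ)

/-!
Every closed `δ`-ball has positive mass, since its centre lies in the support, so it meets some
closed `h`-ball in positive measure; by the ultrametric inequality it is then contained in that
`h`-ball, and we let `p` send it there. Up to a null set the `h`-ball `B̄(τᵢʰ, h)` is covered by
the `δ`-balls, and those with `p j ≠ i` lie in another `h`-ball, which meets `B̄(τᵢʰ, h)` in a
null set. Hence `B̄(τᵢʰ, h)` agrees a.e. with the union of the `δ`-balls in the fibre of `i`,
and these are pairwise `μ`-disjoint.
-/

open Function

namespace IsUltrametricDist

variable {X : Type*} [PseudoMetricSpace X] [IsUltrametricDist X]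

lemma closedBall_subset_closedBall_of_mem_inter {x y z : X} {δ h : ℝ} (hδh : δ ≤ h)
    (hzx : z ∈ closedBall x δ) (hzy : z ∈ closedBall y h) :
    closedBall x δ ⊆ closedBall y h :=
  (closedBall_subset_closedBall hδh).trans
    ((closedBall_eq_of_mem (closedBall_subset_closedBall hδh hzx)).trans
      (closedBall_eq_of_mem hzy).symm).subset

end IsUltrametricDist

section AECover

variable {X ι κ : Type*} [MeasurableSpace X] {μ : Measure X}

lemma exists_measure_inter_ne_zero_of_measure_compl_iUnion_eq_zero [Countable ι] {A : ι → Set X}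
    (hA : μ (⋃ i, A i)ᶜ = 0) {s : Set X} (hs : μ s ≠ 0) : ∃ i, μ (s ∩ A i) ≠ 0 := by
  by_contra! hnull
  have hinter : μ (s ∩ ⋃ i, A i) = 0 := by
    rw [Set.inter_iUnion]
    exact measure_iUnion_null hnull
  have hdiff : μ (s \ ⋃ i, A i) = 0 := measure_mono_null (Set.sdiff_subset_compl _ _) hA
  exact hs (measure_mono_null_ae (ae_le_set.2 (by simp [hdiff])) hinter)

lemma measure_eq_tsum_fiber_of_subset [Countable κ] {A : ι → Set X} {B : κ → Set X}
    (hA : Pairwise (AEDisjoint μ on A)) (hB : Pairwise (AEDisjoint μ on B))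
    (hBm : ∀ j, NullMeasurableSet (B j) μ) (hcover : μ (⋃ j, B j)ᶜ = 0)
    {p : κ → ι} (hp : ∀ j, B j ⊆ A (p j)) (i : ι) :
    μ (A i) = ∑' j : {j // p j = i}, μ (B j) := by
  set F := ⋃ j : {j // p j = i}, B j
  have hfiber_subset : F ⊆ A i := Set.iUnion_subset fun ⟨j, hj⟩ => hj ▸ hp j
  have hpiece : ∀ j, μ ((A i ∩ B j) \ F) = 0 := fun j => by
    by_cases hj : p j = i
    · have hjF : B j ⊆ F := Set.subset_iUnion_of_subset (⟨j, hj⟩ : {k // p k = i}) subset_rfl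
      rw [Set.sdiff_eq_empty.2 (Set.inter_subset_right.trans hjF), measure_empty]
    · exact measure_mono_null (Set.sdiff_subset.trans (Set.inter_subset_inter_right _ (hp j)))
        (hA (Ne.symm hj))
  have hcovered : A i \ F ⊆ (⋃ j, B j)ᶜ ∪ ⋃ j, ((A i ∩ B j) \ F) := by
    intro x ⟨hxA, hxF⟩
    by_cases hx : x ∈ ⋃ j, B j
    · obtain ⟨j, hxj⟩ := Set.mem_iUnion.1 hx
      exact Or.inr (Set.mem_iUnion.2 ⟨j, ⟨hxA, hxj⟩, hxF⟩)
    · exact Or.inl hx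
  have hae : A i =ᵐ[μ] F :=
    (ae_le_set.2 (measure_mono_null hcovered
      (measure_union_null hcover (measure_iUnion_null hpiece)))).antisymm
      hfiber_subset.eventuallyLE
  rw [measure_congr hae]
  exact measure_iUnion₀ (fun a b hab => hB (Subtype.coe_injective.ne hab)) fun j => hBm j

end AECover

namespace IsClosedRepFamily

variable {X : Type*} [MetricSpace X] [MeasurableSpace X] {μ : Measure X} {h : ℝ}
  {ι : Type*} {τ : ι → X}

lemma pairwise_aedisjoint (hτ : IsClosedRepFamily μ h τ) :
    Pairwise (AEDisjoint μ on fun i => closedBall (τ i) h) :=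
  fun i j => hτ.2.1 i j

lemma measure_closedBall_pos (hτ : IsClosedRepFamily μ h τ) (hh : 0 < h) (i : ι) :
    0 < μ (closedBall (τ i) h) :=
  (hτ.1 i h hh).trans_le (measure_mono ball_subset_closedBall)

variable [OpensMeasurableSpace X] [IsFiniteMeasure μ] [Countable ι]

lemma measure_compl_iUnion_closedBall (hτ : IsClosedRepFamily μ h τ) :
    μ (⋃ i, closedBall (τ i) h)ᶜ = 0 := by
  have hunion : μ (⋃ i, closedBall (τ i) h) = μ Set.univ := by
    rw [measure_iUnion₀ hτ.pairwise_aedisjoint fun _ => measurableSet_closedBall.nullMeasurableSet]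
    exact hτ.2.2
  rw [measure_compl (MeasurableSet.iUnion fun _ => measurableSet_closedBall) (measure_ne_top μ _),
    hunion, tsub_self]

lemma exists_closedBall_subset [IsUltrametricDist X] {δ : ℝ} {κ : Type*} {σ : κ → X}
    (hτ : IsClosedRepFamily μ h τ) (hσ : IsClosedRepFamily μ δ σ) (hδ : 0 < δ) (hδh : δ ≤ h)
    (j : κ) : ∃ i, closedBall (σ j) δ ⊆ closedBall (τ i) h := by
  obtain ⟨i, hi⟩ := exists_measure_inter_ne_zero_of_measure_compl_iUnion_eq_zero
    hτ.measure_compl_iUnion_closedBall (hσ.measure_closedBall_pos hδ j).ne'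
  obtain ⟨z, hzσ, hzτ⟩ := nonempty_of_measure_ne_zero hi
  exact ⟨i, IsUltrametricDist.closedBall_subset_closedBall_of_mem_inter hδh hzσ hzτ⟩

end IsClosedRepFamily

theorem stmt2_general {X : Type*} [MetricSpace X]
    [MeasurableSpace X] [BorelSpace X]
    (hultra : ∀ x y z : X, dist x y ≤ max (dist x z) (dist z y))
    (μ : Measure X) [IsFiniteMeasure μ]
    (δ h : ℝ) (hδ : 0 < δ) (hδh : δ ≤ h)
    {ιh ιδ : Type} [Countable ιh] [Countable ιδ]
    (τh : ιh → X) (τδ : ιδ → X)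
    (hτh : IsClosedRepFamily μ h τh) (hτδ : IsClosedRepFamily μ δ τδ) :
    ∃ p : ιδ → ιh, ∀ i : ιh,
      μ (closedBall (τh i) h) = ∑' j : {j : ιδ // p j = i}, μ (closedBall (τδ (j : ιδ)) δ) := by
  have : IsUltrametricDist X := ⟨fun x y z => hultra x z y⟩
  choose p hp using hτh.exists_closedBall_subset hτδ hδ hδh
  exact ⟨p, measure_eq_tsum_fiber_of_subset hτh.pairwise_aedisjoint hτδ.pairwise_aedisjoint
    (fun _ => measurableSet_closedBall.nullMeasurableSet) hτδ.measure_compl_iUnion_closedBall hp⟩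

/-- Given closed `h`-representatives and closed `δ`-representatives with `0 < δ ≤ h`,
the index set of the `δ`-family can be partitioned (via the fibers of a map `p`) so that
the mass of each closed `h`-ball is the sum of the masses of the closed `δ`-balls in the
corresponding block. -/
theorem stmt2 {X : Type*} [MetricSpace X] [CompleteSpace X]
    [TopologicalSpace.SeparableSpace X] [MeasurableSpace X] [BorelSpace X]
    (hultra : ∀ x y z : X, dist x y ≤ max (dist x z) (dist z y))
    (μ : Measure X) [IsFiniteMeasure μ]
    (δ h : ℝ) (hδ : 0 < δ) (hδh : δ ≤ h)
    {ιh ιδ : Type} [Countable ιh] [Countable ιδ]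
    (τh : ιh → X) (τδ : ιδ → X)
    (hτh : IsClosedRepFamily μ h τh) (hτδ : IsClosedRepFamily μ δ τδ) :
    ∃ p : ιδ → ιh, ∀ i : ιh,
      μ (closedBall (τh i) h) = ∑' j : {j : ιδ // p j = i}, μ (closedBall (τδ (j : ιδ)) δ) :=
  stmt2_general hultra μ δ h hδ hδh τh τδ hτh hτδ
end

section
/- Let (X,r,μ) be an ultra-metric measure space, let 0 < δ ≤ h, let (τ_i^h)_{i∈I_h} be a family of closed h-representatives and (τ_j^δ)_{j∈I_δ} a family of closed δ-representatives. Then the cardinality of I_h is at most the cardinality of I_δ, and for every M ∈ ℕ the supremum over all M-element subsets S ⊆ I_h of ∑_{i∈S} μ(B̄(τ_i^h,h)) is greater than or equal to the supremum over all M-element subsets T ⊆ I_δ of ∑_{j∈T} μ(B̄(τ_j^δ,δ)) (i.e. the sum of the M largest family masses at depth h dominates the sum of the M largest family masses at depth δ). -/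
open MeasureTheory Metric

/-- In an ultrametric space, a small closed ball meeting a big closed ball is contained
in it. -/
lemma ultra_ball_subset {X : Type*} [MetricSpace X]
    (hultra : ∀ x y z : X, dist x y ≤ max (dist x z) (dist z y))
    {δ h : ℝ} (hδh : δ ≤ h) {x y : X}
    (hne : (closedBall x δ ∩ closedBall y h).Nonempty) :
    closedBall x δ ⊆ closedBall y h := by
  obtain ⟨z, hz1, hz2⟩ := hne
  intro w hw
  simp only [mem_closedBall] at *
  calc dist w y ≤ max (dist w z) (dist z y) := hultra w y z
    _ ≤ h := by
      apply max_le _ hz2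
      calc dist w z ≤ max (dist w x) (dist x z) := hultra w z x
        _ ≤ h := max_le (hw.trans hδh) ((dist_comm x z ▸ hz1).trans hδh)

/-- If the complement of the union of a family is null and `A` has positive measure,
then `A` meets some member with positive measure. -/
lemma exists_inter_pos {X : Type*} [MeasurableSpace X] {μ : Measure X}
    {ι : Type*} [Countable ι] {B : ι → Set X}
    (hnull : μ (⋃ i, B i)ᶜ = 0) {A : Set X} (hA : μ A ≠ 0) :
    ∃ i, μ (A ∩ B i) ≠ 0 := by
  by_contra hcon
  push_neg at hcon
  apply hA
  have h1 : μ (A \ ⋃ i, B i) = 0 :=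
    measure_mono_null (Set.diff_subset_compl _ _) hnull
  have h2 : μ (A ∩ ⋃ i, B i) = 0 := by
    rw [Set.inter_iUnion]
    exact measure_iUnion_null hcon
  have := measure_le_inter_add_diff μ A (⋃ i, B i)
  rw [h1, h2] at this
  simpa using this

/-- Monotonicity of the family decomposition: for `0 < δ ≤ h`, the number of
`h`-representatives is at most the number of `δ`-representatives, and for every `M ∈ ℕ`
the sum of the `M` largest family masses at depth `h` (expressed as the supremum over
subsets of at most `M` indices of the corresponding mass sums) dominates the sum of the
`M` largest family masses at depth `δ`. -/
theorem stmt3 {X : Type*} [MetricSpace X] [CompleteSpace X]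
    [TopologicalSpace.SeparableSpace X] [MeasurableSpace X] [BorelSpace X]
    (hultra : ∀ x y z : X, dist x y ≤ max (dist x z) (dist z y))
    (μ : Measure X) [IsFiniteMeasure μ]
    (δ h : ℝ) (hδ : 0 < δ) (hδh : δ ≤ h)
    {ιh ιδ : Type} [Countable ιh] [Countable ιδ]
    (τh : ιh → X) (τδ : ιδ → X)
    (hτh : IsClosedRepFamily μ h τh) (hτδ : IsClosedRepFamily μ δ τδ) :
    Cardinal.mk ιh ≤ Cardinal.mk ιδ ∧
    ∀ M : ℕ,
      (⨆ (T : Finset ιδ) (_ : T.card ≤ M), ∑ j ∈ T, μ (closedBall (τδ j) δ)) ≤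
      (⨆ (S : Finset ιh) (_ : S.card ≤ M), ∑ i ∈ S, μ (closedBall (τh i) h)) := by
  classical
  obtain ⟨hsupph, hdisjh, hsumh⟩ := hτh
  obtain ⟨hsuppδ, hdisjδ, hsumδ⟩ := hτδ
  have hh : 0 < h := hδ.trans_le hδh
  have hposδ : ∀ j, μ (closedBall (τδ j) δ) ≠ 0 :=
    fun j => (lt_of_lt_of_le (hsuppδ j δ hδ) (measure_mono ball_subset_closedBall)).ne'
  have hposh : ∀ i, μ (closedBall (τh i) h) ≠ 0 :=
    fun i => (lt_of_lt_of_le (hsupph i h hh) (measure_mono ball_subset_closedBall)).ne'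
  -- complements of the unions are null
  have hnull : ∀ {ι : Type} [Countable ι] (τ : ι → X) (r : ℝ),
      (∀ i j : ι, i ≠ j → μ (closedBall (τ i) r ∩ closedBall (τ j) r) = 0) →
      (∑' i, μ (closedBall (τ i) r) = μ Set.univ) →
      μ (⋃ i, closedBall (τ i) r)ᶜ = 0 := by
    intro ι _ τ r hdisj hsum
    have hU : μ (⋃ i, closedBall (τ i) r) = ∑' i, μ (closedBall (τ i) r) :=
      measure_iUnion₀ (fun i j hij => hdisj i j hij)
        (fun i => measurableSet_closedBall.nullMeasurableSet)
    rw [measure_compl (MeasurableSet.iUnion fun i => measurableSet_closedBall)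
      (measure_ne_top μ _), hU, hsum, tsub_self]
  have hnullh := hnull τh h hdisjh hsumh
  have hnullδ := hnull τδ δ hdisjδ hsumδ
  -- map f : ιδ → ιh with containment of balls
  have hf : ∀ j : ιδ, ∃ i : ιh, closedBall (τδ j) δ ⊆ closedBall (τh i) h := by
    intro j
    obtain ⟨i, hi⟩ := exists_inter_pos hnullh (hposδ j)
    exact ⟨i, ultra_ball_subset hultra hδh (nonempty_of_measure_ne_zero hi)⟩
  choose f hfsub using hf
  -- map g : ιh → ιδ with containment of balls, injective
  have hg : ∀ i : ιh, ∃ j : ιδ, closedBall (τδ j) δ ⊆ closedBall (τh i) h := by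
    intro i
    obtain ⟨j, hj⟩ := exists_inter_pos hnullδ (hposh i)
    refine ⟨j, ultra_ball_subset hultra hδh ?_⟩
    obtain ⟨z, hz1, hz2⟩ := nonempty_of_measure_ne_zero hj
    exact ⟨z, hz2, hz1⟩
  choose g hgsub using hg
  have hginj : Function.Injective g := by
    intro i1 i2 heq
    by_contra hne
    apply hposδ (g i1)
    refine measure_mono_null ?_ (hdisjh i1 i2 hne)
    exact Set.subset_inter (hgsub i1) (heq ▸ hgsub i2)
  refine ⟨Cardinal.mk_le_of_injective hginj, ?_⟩
  intro M
  refine iSup₂_le fun T hT => ?_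
  refine le_trans ?_ (le_iSup₂ (T.image f) ((Finset.card_image_le).trans hT))
  rw [← Finset.sum_fiberwise_of_maps_to (fun j hj => Finset.mem_image_of_mem f hj)
    (fun j => μ (closedBall (τδ j) δ))]
  refine Finset.sum_le_sum fun i _ => ?_
  rw [← measure_biUnion_finset₀ ?_ (fun j _ => measurableSet_closedBall.nullMeasurableSet)]
  · refine measure_mono (Set.iUnion₂_subset fun j hj => ?_)
    rw [Finset.mem_filter] at hj
    exact hj.2 ▸ hfsub j
  · intro j1 hj1 j2 hj2 hne
    exact hdisjδ j1 j2 hne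
end

section
/- Let (X,r,μ) be an ultra-metric measure space, let h > 0, let (τ_i)_{i∈I} be a family of closed h-representatives, and define the purely atomic measure μ_h := ∑_{i∈I} μ(B̄(τ_i,h)) δ_{τ_i} on X. Then the Lévy–Prokhorov distance between μ and μ_h satisfies d_Pr(μ, μ_h) ≤ h. -/
open MeasureTheory Metric

private theorem stmt5_aux {X : Type*} [MetricSpace X] [CompleteSpace X]
    [TopologicalSpace.SeparableSpace X] [MeasurableSpace X] [BorelSpace X]
    (μ : Measure X) [IsFiniteMeasure μ] (h : ℝ) (hh : 0 < h)
    {ι : Type} [Countable ι] (τ : ι → X)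
    (hdisj : ∀ i j : ι, i ≠ j → μ (closedBall (τ i) h ∩ closedBall (τ j) h) = 0)
    (hsum : ∑' i, μ (closedBall (τ i) h) = μ Set.univ) :
    levyProkhorovEDist μ
        (Measure.sum fun i => μ (closedBall (τ i) h) • Measure.dirac (τ i)) ≤
      ENNReal.ofReal h := by
  classical
  set c : ι → ENNReal := fun i => μ (closedBall (τ i) h) with hc
  set ν : Measure X := Measure.sum fun i => c i • Measure.dirac (τ i) with hν
  have hνs : ∀ s : Set X, MeasurableSet s → ν s = ∑' i, if τ i ∈ s then c i else 0 := by
    intro s hs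
    rw [hν, Measure.sum_apply _ hs]
    congr 1; ext i
    rw [Measure.smul_apply, Measure.dirac_apply' _ hs, Set.indicator_apply]
    by_cases hi : τ i ∈ s <;> simp [hi]
  have hAE : Pairwise (Function.onFun (MeasureTheory.AEDisjoint μ)
      (fun i => closedBall (τ i) h)) := fun i j hij => hdisj i j hij
  -- full measure of the union
  have hU : μ (⋃ i, closedBall (τ i) h) = μ Set.univ := by
    rw [measure_iUnion₀ hAE (fun i => measurableSet_closedBall.nullMeasurableSet), hsum]
  have hUc : μ (⋃ i, closedBall (τ i) h)ᶜ = 0 := by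
    rw [measure_compl (MeasurableSet.iUnion fun i => measurableSet_closedBall) (measure_ne_top μ _), hU]
    simp
  apply levyProkhorovEDist_le_of_forall
  intro ε B hε hεtop hB
  have hεh : h < ε.toReal :=
    (ENNReal.ofReal_lt_iff_lt_toReal hh.le hεtop.ne).mp hε
  constructor
  · -- μ B ≤ ν (thickening ε B) + ε
    have h1 : μ B ≤ μ (B ∩ ⋃ i, closedBall (τ i) h) := by
      refine le_trans ?_ (le_refl _)
      calc μ B ≤ μ ((B ∩ ⋃ i, closedBall (τ i) h) ∪ (⋃ i, closedBall (τ i) h)ᶜ) := by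
              apply measure_mono; intro x hx
              by_cases hx' : x ∈ ⋃ i, closedBall (τ i) h
              · exact Or.inl ⟨hx, hx'⟩
              · exact Or.inr hx'
        _ ≤ μ (B ∩ ⋃ i, closedBall (τ i) h) + μ (⋃ i, closedBall (τ i) h)ᶜ := measure_union_le _ _
        _ = μ (B ∩ ⋃ i, closedBall (τ i) h) := by rw [hUc, add_zero]
    have h2 : μ (B ∩ ⋃ i, closedBall (τ i) h) ≤ ∑' i, μ (B ∩ closedBall (τ i) h) := by
      rw [Set.inter_iUnion]; exact measure_iUnion_le _
    have h3 : ∀ i, μ (B ∩ closedBall (τ i) h) ≤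
        (if τ i ∈ thickening ε.toReal B then c i else 0) := by
      intro i
      by_cases hi : τ i ∈ thickening ε.toReal B
      · simpa [hi] using measure_mono (Set.inter_subset_right (s := B))
      · have : B ∩ closedBall (τ i) h = ∅ := by
          ext x; simp only [Set.mem_inter_iff, Set.mem_empty_iff_false, iff_false, not_and]
          intro hxB hxb
          exact hi (mem_thickening_iff.mpr ⟨x, hxB, lt_of_le_of_lt (by
            rw [dist_comm]; exact mem_closedBall.mp hxb) hεh⟩)
        simp [this]
    calc μ B ≤ ∑' i, μ (B ∩ closedBall (τ i) h) := h1.trans h2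
      _ ≤ ∑' i, (if τ i ∈ thickening ε.toReal B then c i else 0) := ENNReal.tsum_le_tsum h3
      _ = ν (thickening ε.toReal B) := (hνs _ isOpen_thickening.measurableSet).symm
      _ ≤ ν (thickening ε.toReal B) + ε := le_self_add
  · -- ν B ≤ μ (thickening ε B) + ε
    have key : ν B = ∑' i : {i // τ i ∈ B}, c i.1 := by
      have e1 : ∀ i, (if τ i ∈ B then c i else 0) = Set.indicator {j | τ j ∈ B} c i :=
        fun i => by simp only [Set.indicator_apply, Set.mem_setOf_eq]
      rw [hνs B hB]; simp_rw [e1]; exact (tsum_subtype _ _).symm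
    have hsub : (⋃ i : {i // τ i ∈ B}, closedBall (τ i.1) h) ⊆ thickening ε.toReal B := by
      rintro x hx
      simp only [Set.mem_iUnion] at hx
      obtain ⟨i, hi⟩ := hx
      exact mem_thickening_iff.mpr ⟨τ i.1, i.2, lt_of_le_of_lt (mem_closedBall.mp hi) hεh⟩
    calc ν B = ∑' i : {i // τ i ∈ B}, c i.1 := key
      _ = μ (⋃ i : {i // τ i ∈ B}, closedBall (τ i.1) h) := by
          refine (measure_iUnion₀ ?_ (fun i => measurableSet_closedBall.nullMeasurableSet)).symm
          intro i j hij
          exact hdisj i.1 j.1 (fun e => hij (Subtype.ext e))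
      _ ≤ μ (thickening ε.toReal B) := measure_mono hsub
      _ ≤ μ (thickening ε.toReal B) + ε := le_self_add

/-- The Lévy–Prokhorov distance between `μ` and the purely atomic measure
`μ_h = ∑ᵢ μ(B̄(τᵢ,h)) δ_{τᵢ}` obtained from a family of closed `h`-representatives is at
most `h`. -/
theorem stmt5 {X : Type*} [MetricSpace X] [CompleteSpace X]
    [TopologicalSpace.SeparableSpace X] [MeasurableSpace X] [BorelSpace X]
    (hultra : ∀ x y z : X, dist x y ≤ max (dist x z) (dist z y))
    (μ : Measure X) [IsFiniteMeasure μ] (h : ℝ) (hh : 0 < h)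
    {ι : Type} [Countable ι] (τ : ι → X) (hτ : IsClosedRepFamily μ h τ) :
    levyProkhorovEDist μ
        (Measure.sum fun i => μ (closedBall (τ i) h) • Measure.dirac (τ i)) ≤
      ENNReal.ofReal h :=
  stmt5_aux μ h hh τ hτ.2.1 hτ.2.2
end

section
/- Let (X,r,μ) be an ultra-metric measure space and let h > 0. Then (μ ⊗ μ)({(x,y) ∈ X × X : r(x,y) = h}) = 0 if and only if μ(B̄(x,h)) = μ(B(x,h)) for every x ∈ supp(μ), i.e. if and only if every closed ball of radius h centered in the support has the same μ-measure as the corresponding open ball. -/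
/-!
By Tonelli, `μ ⊗ μ` of `{r(x,y) = h}` is `∫ μ(sphere x h) dμ(x)`, so it vanishes iff almost every
sphere of radius `h` is null. In an ultrametric space `sphere x h = sphere y h` whenever
`r(x,y) < h`, so being null is constant on open `h`-balls; as such balls around points of the
support have positive mass and the support is conull, "almost every `x`" becomes
"every `x` in the support". For finite `μ`, a null sphere means `μ(B̄(x,h)) = μ(B(x,h))`.
-/

open MeasureTheory Metric

lemma msupp_eq_support {X : Type*} [MetricSpace X] [MeasurableSpace X] (μ : Measure X) :
    msupp μ = μ.support := by
  ext x
  exact (nhds_basis_ball.mem_measureSupport).symm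

lemma ae_iff_forall_mem_support_of_dist_lt {X : Type*} [PseudoMetricSpace X]
    [HereditarilyLindelofSpace X] [MeasurableSpace X] {μ : Measure X} {P : X → Prop} {h : ℝ}
    (hh : 0 < h) (hP : ∀ x, ∀ y ∈ ball x h, P y → P x) :
    (∀ᵐ x ∂μ, P x) ↔ ∀ x ∈ μ.support, P x := by
  refine ⟨fun hae x hx => ?_, fun hsupp => ?_⟩
  · have hpos : 0 < μ (ball x h) :=
      (Measure.mem_support_iff_forall x).1 hx _ (ball_mem_nhds x hh)
    obtain ⟨y, hy, hPy⟩ :=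
      Measure.exists_mem_of_measure_ne_zero_of_ae hpos.ne' (ae_restrict_of_ae hae)
    exact hP x y hy hPy
  · filter_upwards [Measure.support_mem_ae] with x hx using hsupp x hx

lemma measure_prod_setOf_dist_eq_null_iff {X : Type*} [PseudoMetricSpace X]
    [MeasurableSpace X] [OpensMeasurableSpace X] [SecondCountableTopology X]
    (μ ν : Measure X) [SFinite ν] (h : ℝ) :
    μ.prod ν {p : X × X | dist p.1 p.2 = h} = 0 ↔ ∀ᵐ x ∂μ, ν (sphere x h) = 0 := by
  have hfiber : ∀ x, Prod.mk x ⁻¹' {p : X × X | dist p.1 p.2 = h} = sphere x h := fun x => by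
    ext y
    simp [dist_comm]
  rw [Measure.measure_prod_null
    (isClosed_eq (continuous_fst.dist continuous_snd) continuous_const).measurableSet]
  simp only [hfiber]
  rfl

lemma measure_sphere_eq_zero_iff {X : Type*} [PseudoMetricSpace X] [MeasurableSpace X]
    [OpensMeasurableSpace X] (μ : Measure X) [IsFiniteMeasure μ] (x : X) (h : ℝ) :
    μ (sphere x h) = 0 ↔ μ (closedBall x h) = μ (ball x h) := by
  rw [← closedBall_sdiff_ball, measure_sdiff ball_subset_closedBall
    measurableSet_ball.nullMeasurableSet (measure_ne_top μ _), tsub_eq_zero_iff_le,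
    le_antisymm_iff, and_iff_left (measure_mono ball_subset_closedBall)]

lemma IsUltrametricDist.sphere_eq_of_mem_ball {X : Type*} [PseudoMetricSpace X]
    [IsUltrametricDist X] {x y : X} {h : ℝ} (hy : y ∈ ball x h) : sphere x h = sphere y h := by
  rw [← closedBall_sdiff_ball, ← closedBall_sdiff_ball,
    closedBall_eq_of_mem (ball_subset_closedBall hy), ball_eq_of_mem hy]

theorem stmt8_general {X : Type*} [MetricSpace X]
    [TopologicalSpace.SeparableSpace X] [MeasurableSpace X] [BorelSpace X]
    (hultra : ∀ x y z : X, dist x y ≤ max (dist x z) (dist z y))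
    (μ : Measure X) [IsFiniteMeasure μ] (h : ℝ) (hh : 0 < h) :
    (μ.prod μ) {p : X × X | dist p.1 p.2 = h} = 0 ↔
      ∀ x ∈ msupp μ, μ (closedBall x h) = μ (ball x h) := by
  have : IsUltrametricDist X := ⟨fun x y z => hultra x z y⟩
  have : SecondCountableTopology X := UniformSpace.secondCountable_of_separable X
  rw [measure_prod_setOf_dist_eq_null_iff, msupp_eq_support,
    ae_iff_forall_mem_support_of_dist_lt hh fun x y hy hPy => by
      rwa [IsUltrametricDist.sphere_eq_of_mem_ball hy]]
  simp only [measure_sphere_eq_zero_iff]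

/-- In an ultra-metric measure space, `μ ⊗ μ` puts no mass on pairs at distance exactly `h`
if and only if every closed `h`-ball centered in the support has the same measure as the
corresponding open `h`-ball. -/
theorem stmt8 {X : Type*} [MetricSpace X] [CompleteSpace X]
    [TopologicalSpace.SeparableSpace X] [MeasurableSpace X] [BorelSpace X]
    (hultra : ∀ x y z : X, dist x y ≤ max (dist x z) (dist z y))
    (μ : Measure X) [IsFiniteMeasure μ] (h : ℝ) (hh : 0 < h) :
    (μ.prod μ) {p : X × X | dist p.1 p.2 = h} = 0 ↔
      ∀ x ∈ msupp μ, μ (closedBall x h) = μ (ball x h) :=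
  stmt8_general hultra μ h hh
end

section
/- Let (X,r,μ) be an ultra-metric measure space. Then the pairwise distance distribution ν² := (μ ⊗ μ) ∘ r⁻¹, i.e. the pushforward of the product measure μ ⊗ μ under the map (x,y) ↦ r(x,y), is a purely atomic finite measure on [0,∞): there exists a countable set S ⊆ [0,∞) with ν²([0,∞) ∖ S) = 0. -/
open MeasureTheory Metric

/-- The pairwise distance distribution `ν² = (μ ⊗ μ) ∘ r⁻¹` of an ultra-metric measure space
is purely atomic: it is carried by a countable set. -/
theorem stmt9 {X : Type*} [MetricSpace X] [CompleteSpace X]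
    [TopologicalSpace.SeparableSpace X] [MeasurableSpace X] [BorelSpace X]
    (hultra : ∀ x y z : X, dist x y ≤ max (dist x z) (dist z y))
    (μ : Measure X) [IsFiniteMeasure μ] :
    ∃ S : Set ℝ, S.Countable ∧
      Measure.map (fun p : X × X => dist p.1 p.2) (μ.prod μ) Sᶜ = 0 := by
  obtain ⟨D, hDc, hDd⟩ := TopologicalSpace.exists_countable_dense X
  refine ⟨insert 0 (Set.image2 dist D D), (hDc.image2 hDc dist).insert 0, ?_⟩
  have hsub : ∀ x y : X, dist x y ∈ insert (0:ℝ) (Set.image2 dist D D) := by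
    intro x y
    rcases eq_or_ne x y with rfl | hxy
    · simp
    · have hε : 0 < dist x y := dist_pos.2 hxy
      obtain ⟨d, hdD, hd⟩ := hDd.exists_dist_lt x hε
      obtain ⟨d', hd'D, hd'⟩ := hDd.exists_dist_lt y hε
      rw [dist_comm] at hd hd'
      have ha : dist x d' ≤ dist x y :=
        (hultra x d' y).trans (max_le le_rfl (dist_comm y d' ▸ hd'.le))
      have h1 : dist d d' ≤ dist x y := (hultra d d' x).trans (max_le hd.le ha)
      have h2 : dist x y ≤ dist d d' := by
        by_contra h
        push_neg at h
        have hb : dist d y < dist x y := lt_of_le_of_lt (hultra d y d') (max_lt h hd')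
        exact absurd (lt_of_le_of_lt (hultra x y d) (max_lt (dist_comm x d ▸ hd) hb))
          (lt_irrefl _)
      exact Set.mem_insert_iff.2 (Or.inr ⟨d, hdD, d', hd'D, le_antisymm h1 h2⟩)
  have hmeas : Measurable (fun p : X × X => dist p.1 p.2) :=
    (continuous_dist.comp (continuous_fst.prodMk continuous_snd)).measurable
  have hS : MeasurableSet (insert (0:ℝ) (Set.image2 dist D D))ᶜ :=
    (((hDc.image2 hDc dist).insert 0).measurableSet).compl
  rw [Measure.map_apply hmeas hS]
  have hpre : (fun p : X × X => dist p.1 p.2) ⁻¹'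
      (insert (0:ℝ) (Set.image2 dist D D))ᶜ = (∅ : Set (X × X)) := by
    ext ⟨x, y⟩
    simp [hsub x y]
  rw [hpre, measure_empty]
end

section
/- Let n ∈ ℕ, let X = {x_1,…,x_n} be a finite set equipped with an ultrametric r, let a_1,…,a_n > 0 and μ = ∑_{i=1}^n a_i δ_{x_i}. Then (X,r,μ) is identifiable by family sizes if and only if for all subsets I, J ⊆ {1,…,n} with I ≠ J one has ∑_{i∈I} a_i ≠ ∑_{j∈J} a_j. -/
open MeasureTheory Metric

/-- An (ultra-)metric measure space `(X, dist, μ)` is identifiable by family sizes if for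
every `h > 0` and all subsets `A¹, A² ⊆ supp μ` whose distinct points are at mutual
distance `> h`, having distinct closed `h`-enlargements (within the support) forces the
corresponding sums of closed-`h`-ball masses to differ. -/
def IdentifiableByFamilySizes {X : Type*} [MetricSpace X] [MeasurableSpace X]
    (μ : Measure X) : Prop :=
  ∀ h : ℝ, 0 < h → ∀ A1 A2 : Set X, A1 ⊆ msupp μ → A2 ⊆ msupp μ →
    (∀ x ∈ A1, ∀ y ∈ A1, x ≠ y → h < dist x y) →
    (∀ x ∈ A2, ∀ y ∈ A2, x ≠ y → h < dist x y) →
    {y ∈ msupp μ | ∃ x ∈ A1, dist x y ≤ h} ≠ {y ∈ msupp μ | ∃ x ∈ A2, dist x y ≤ h} →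
    ∑' p : A1, μ (closedBall (p : X) h) ≠ ∑' p : A2, μ (closedBall (p : X) h)

/-!
In a finite ultrametric space, closed `h`-balls around `h`-separated points are disjoint, so the
sum of their masses is the mass of their union, the `h`-enlargement. Hence identifiability by
family sizes says exactly that distinct enlargements have distinct masses. For small `h` every
set is its own enlargement, so this is injectivity of `s ↦ μ s` on all sets. For
`μ = ∑ aᵢ δ_{xᵢ}` the mass of a set is the subset sum of the weights of its points.
-/

open scoped ENNReal

lemma mem_msupp_of_measure_singleton_pos {X : Type*} [MetricSpace X] [MeasurableSpace X]
    {μ : Measure X} {y : X} (hy : 0 < μ {y}) : y ∈ msupp μ :=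
  fun _ hε => hy.trans_le (measure_mono (Set.singleton_subset_iff.2 (mem_ball_self hε)))

section Ultrametric

variable {X : Type*} [MetricSpace X]

lemma exists_pos_forall_lt_dist_of_ne [Finite X] :
    ∃ h : ℝ, 0 < h ∧ ∀ p q : X, p ≠ q → h < dist p q := by
  have hsmall : ∀ᶠ h in nhdsWithin (0 : ℝ) (Set.Ioi 0),
      ∀ pq : {pq : X × X // pq.1 ≠ pq.2}, h < dist pq.1.1 pq.1.2 :=
    Filter.eventually_all.2 fun pq =>
      (eventually_lt_nhds (dist_pos.2 pq.2)).filter_mono nhdsWithin_le_nhds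
  obtain ⟨h, hlt, hh⟩ := (hsmall.and self_mem_nhdsWithin).exists
  exact ⟨h, hh, fun p q hpq => hlt ⟨(p, q), hpq⟩⟩

lemma closedBall_eq_singleton_of_forall_lt_dist {h : ℝ} (hh : 0 ≤ h)
    (hsep : ∀ p q : X, p ≠ q → h < dist p q) (p : X) : closedBall p h = {p} := by
  ext q
  refine ⟨fun hq => ?_, fun hq => hq ▸ mem_closedBall_self hh⟩
  by_contra hqp
  exact (hsep q p hqp).not_ge hq

variable [IsUltrametricDist X]

lemma pairwiseDisjoint_closedBall_of_forall_lt_dist {A : Set X} {h : ℝ}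
    (hA : ∀ p ∈ A, ∀ q ∈ A, p ≠ q → h < dist p q) : A.PairwiseDisjoint (closedBall · h) :=
  fun p hp q hq hpq => Set.disjoint_left.2 fun y hyp hyq =>
    (hA p hp q hq hpq).not_ge <|
      (dist_triangle_max p y q).trans (max_le (by simpa [dist_comm] using hyp) hyq)

theorem identifiableByFamilySizes_iff_injective [Finite X] [MeasurableSpace X]
    [OpensMeasurableSpace X] {μ : Measure X} (hμ : msupp μ = Set.univ) :
    IdentifiableByFamilySizes μ ↔ Function.Injective μ := by
  have henl (A : Set X) (h : ℝ) :
      {y ∈ msupp μ | ∃ x ∈ A, dist x y ≤ h} = ⋃ p ∈ A, closedBall p h := by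
    ext y
    simp [hμ, dist_comm]
  have hmass (A : Set X) (h : ℝ) (hA : ∀ p ∈ A, ∀ q ∈ A, p ≠ q → h < dist p q) :
      ∑' p : A, μ (closedBall (p : X) h) = μ (⋃ p ∈ A, closedBall p h) :=
    (measure_biUnion A.to_countable (pairwiseDisjoint_closedBall_of_forall_lt_dist hA)
      fun _ _ => measurableSet_closedBall).symm
  constructor
  · intro hid s t hst
    obtain ⟨h, hh, hsep⟩ := exists_pos_forall_lt_dist_of_ne (X := X)
    have hself (A : Set X) : ⋃ p ∈ A, closedBall p h = A := by
      simp only [closedBall_eq_singleton_of_forall_lt_dist hh.le hsep, Set.biUnion_of_singleton]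
    by_contra hne
    refine hid h hh s t (by simp [hμ]) (by simp [hμ]) (fun p _ q _ => hsep p q)
      (fun p _ q _ => hsep p q) (by rwa [henl, henl, hself, hself]) ?_
    rw [hmass s h fun p _ q _ => hsep p q, hmass t h fun p _ q _ => hsep p q, hself, hself, hst]
  · intro hinj h _ A1 A2 _ _ hA1 hA2 hne hsum
    rw [hmass A1 h hA1, hmass A2 h hA2] at hsum
    exact hne (by rw [henl, henl, hinj hsum])

end Ultrametric

section Atomic

variable {X ι : Type*} [MeasurableSpace X] [MeasurableSingletonClass X] [Fintype ι]

open scoped Classical in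
lemma sum_smul_dirac_apply (c : ι → ℝ≥0∞) (x : ι → X) (s : Set X) :
    (∑ i, c i • Measure.dirac (x i)) s = ∑ i with x i ∈ s, c i := by
  simp [Measure.coe_finsetSum, Measure.dirac_apply, Set.indicator_apply, Finset.sum_filter]

lemma msupp_sum_smul_dirac [MetricSpace X] {c : ι → ℝ≥0∞} {x : ι → X}
    (hx : Function.Surjective x) (hc : ∀ i, c i ≠ 0) :
    msupp (∑ i, c i • Measure.dirac (x i)) = Set.univ := by
  refine Set.eq_univ_of_forall fun y => ?_
  obtain ⟨i, rfl⟩ := hx y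
  refine mem_msupp_of_measure_singleton_pos ?_
  rw [sum_smul_dirac_apply]
  exact (pos_iff_ne_zero.2 (hc i)).trans_le
    (Finset.single_le_sum (fun _ _ => zero_le) (by simp))

theorem injective_sum_smul_dirac_iff {x : ι → X} (hx : Function.Bijective x) {a : ι → ℝ}
    (ha : ∀ i, 0 ≤ a i) :
    Function.Injective ⇑(∑ i, ENNReal.ofReal (a i) • Measure.dirac (x i) : Measure X) ↔
      ∀ I J : Finset ι, I ≠ J → ∑ i ∈ I, a i ≠ ∑ j ∈ J, a j := by
  classical
  let indices (s : Set X) : Finset ι := {i | x i ∈ s}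
  have hindices : Function.Bijective indices := by
    refine ⟨fun s t hst => Set.ext fun y => ?_, fun I => ⟨x '' I, ?_⟩⟩
    · obtain ⟨i, rfl⟩ := hx.2 y
      simpa [indices] using Finset.ext_iff.1 hst i
    · ext i
      simp [indices, hx.1.mem_set_image]
  have hμ : ⇑(∑ i, ENNReal.ofReal (a i) • Measure.dirac (x i) : Measure X) =
      (fun I => ENNReal.ofReal (∑ i ∈ I, a i)) ∘ indices := by
    ext s
    rw [sum_smul_dirac_apply, Function.comp_apply, ENNReal.ofReal_sum_of_nonneg fun i _ => ha i]
  have hofReal : Function.Injective (fun I : Finset ι => ENNReal.ofReal (∑ i ∈ I, a i)) ↔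
      Function.Injective (fun I : Finset ι => ∑ i ∈ I, a i) :=
    ⟨fun h I J hIJ => h (congrArg ENNReal.ofReal hIJ), fun h I J hIJ => h <|
      (ENNReal.ofReal_eq_ofReal_iff (Finset.sum_nonneg fun i _ => ha i)
        (Finset.sum_nonneg fun i _ => ha i)).1 hIJ⟩
  rw [hμ, Function.Injective.of_comp_iff' _ hindices, hofReal]
  exact Function.injective_iff_pairwise_ne

end Atomic

/-- A finite ultra-metric measure space `({x_1,…,x_n}, r, ∑ a_i δ_{x_i})` with all `a_i > 0`
is identifiable by family sizes iff all subset sums of the `a_i` are pairwise distinct. -/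
theorem stmt10 {X : Type*} [MetricSpace X] [MeasurableSpace X] [BorelSpace X]
    (hultra : ∀ x y z : X, dist x y ≤ max (dist x z) (dist z y))
    (n : ℕ) (x : Fin n → X) (hx : Function.Bijective x)
    (a : Fin n → ℝ) (ha : ∀ i, 0 < a i)
    (μ : Measure X)
    (hμ : μ = ∑ i : Fin n, ENNReal.ofReal (a i) • Measure.dirac (x i)) :
    IdentifiableByFamilySizes μ ↔
      ∀ I J : Finset (Fin n), I ≠ J → ∑ i ∈ I, a i ≠ ∑ j ∈ J, a j := by
  have : IsUltrametricDist X := ⟨fun x y z => hultra x z y⟩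
  have : Finite X := .of_surjective x hx.2
  subst hμ
  rw [identifiableByFamilySizes_iff_injective
      (msupp_sum_smul_dirac hx.2 fun i => (ENNReal.ofReal_pos.2 (ha i)).ne'),
    injective_sum_smul_dirac_iff hx fun i => (ha i).le]
end

section
/- Let n ∈ ℕ and let X_1,…,X_n be independent real-valued random variables on a probability space such that the law of each X_i is absolutely continuous with respect to Lebesgue measure. Then almost surely, for all subsets I, J ⊆ {1,…,n} with I ≠ J one has ∑_{i∈I} X_i ≠ ∑_{j∈J} X_j. -/
/-!
If `Y` is independent of `X` and the law of `X` has no atoms, then by Fubini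
`P(X = Y) = ∫ P(X = y) dP_Y(y) = 0`. For `I ≠ J` pick `i` in the symmetric difference: the event
`∑_I X = ∑_J X` says that `±X_i` equals a linear combination of the other variables, which is
independent of `X_i`, and the law of `±X_i` is atomless because it is absolutely continuous.
-/

open MeasureTheory ProbabilityTheory

lemma MeasureTheory.Measure.AbsolutelyContinuous.nullSingletonClass {α : Type*}
    [MeasurableSpace α] {μ ν : Measure α} (h : μ ≪ ν) [NullSingletonClass ν] :
    NullSingletonClass μ :=
  ⟨fun x => h (measure_singleton x)⟩

lemma MeasureTheory.Measure.nullSingletonClass_map_of_injective {α β : Type*}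
    [MeasurableSpace α] [MeasurableSpace β] [MeasurableSingletonClass β]
    (μ : Measure α) [NullSingletonClass μ]
    {f : α → β} (hf : AEMeasurable f μ) (hinj : Function.Injective f) :
    NullSingletonClass (μ.map f) :=
  ⟨fun y => by
    rw [Measure.map_apply₀ hf (measurableSet_singleton y).nullMeasurableSet]
    exact (Set.subsingleton_singleton.preimage hinj).measure_zero μ⟩

lemma ProbabilityTheory.IndepFun.measure_eq_eq_zero {Ω α : Type*} [MeasurableSpace Ω]
    [MeasurableSpace α] [MeasurableEq α] {P : Measure Ω} [IsFiniteMeasure P] {f g : Ω → α}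
    (hf : AEMeasurable f P) (hg : AEMeasurable g P) (hfg : f ⟂ᵢ[P] g)
    [NullSingletonClass (P.map f)] :
    P {ω | f ω = g ω} = 0 := by
  have hprod := (indepFun_iff_map_prod_eq_prod_map_map hf hg).1 hfg
  calc P {ω | f ω = g ω} = P.map (fun ω => (f ω, g ω)) (Set.diagonal α) :=
        (Measure.map_apply₀ (hf.prodMk hg) measurableSet_diagonal.nullMeasurableSet).symm
    _ = ∫⁻ y, P.map f {y} ∂P.map g := by
        rw [hprod, Measure.prod_apply_symm measurableSet_diagonal]
        rfl
    _ = 0 := by simp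

lemma ProbabilityTheory.iIndepFun.measure_sum_mul_eq_zero {Ω ι : Type*} [MeasurableSpace Ω]
    {P : Measure Ω} [IsFiniteMeasure P] [Fintype ι] {X : ι → Ω → ℝ}
    (hX : ∀ k, Measurable (X k)) (hindep : iIndepFun X P) (c : ι → ℝ) {i : ι} (hci : c i ≠ 0)
    [NullSingletonClass (P.map (X i))] :
    P {ω | ∑ k, c k * X k ω = 0} = 0 := by
  classical
  set Z : ι → Ω → ℝ := fun k ω => c k * X k ω
  have hZ : ∀ k, Measurable (Z k) := fun k => (hX k).const_mul (c k)
  have hZindep : iIndepFun Z P := hindep.comp (fun k x => c k * x) fun k => measurable_const_mul _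
  have hrest : Z i ⟂ᵢ[P] -∑ k ∈ Finset.univ.erase i, Z k :=
    (hZindep.indepFun_finsetSum_of_notMem hZ (Finset.notMem_erase i _)).symm.comp
      measurable_id measurable_neg
  have : NullSingletonClass (P.map (Z i)) := by
    change NullSingletonClass (P.map ((c i * ·) ∘ X i))
    rw [← Measure.map_map (measurable_const_mul _) (hX i)]
    exact Measure.nullSingletonClass_map_of_injective _ (measurable_const_mul _).aemeasurable
      (mul_right_injective₀ hci)
  convert hrest.measure_eq_eq_zero (hZ i).aemeasurable (by fun_prop) using 2
  ext ω
  simp only [Set.mem_ofPred_eq, Pi.neg_apply, Finset.sum_apply, eq_neg_iff_add_eq_zero, Z]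
  rw [Finset.add_sum_erase _ (fun k => c k * X k ω) (Finset.mem_univ i)]

/-- If `X_1, …, X_n` are independent real random variables whose laws are absolutely
continuous with respect to Lebesgue measure, then almost surely all their subset sums are
pairwise distinct. -/
theorem stmt12 {Ω : Type*} [MeasurableSpace Ω] (P : Measure Ω) [IsProbabilityMeasure P]
    (n : ℕ) (X : Fin n → Ω → ℝ) (hmeas : ∀ i, Measurable (X i))
    (hindep : ProbabilityTheory.iIndepFun X P)
    (hac : ∀ i, Measure.map (X i) P ≪ volume) :
    ∀ᵐ ω ∂P, ∀ I J : Finset (Fin n), I ≠ J → ∑ i ∈ I, X i ω ≠ ∑ j ∈ J, X j ω := by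
  classical
  refine ae_all_iff.2 fun I => ae_all_iff.2 fun J => ?_
  by_cases hIJ : I = J
  · simp [hIJ]
  set c : Fin n → ℝ := fun k => (if k ∈ I then 1 else 0) - (if k ∈ J then 1 else 0)
  have hsum (ω : Ω) : ∑ k, c k * X k ω = ∑ i ∈ I, X i ω - ∑ j ∈ J, X j ω := by
    simp [c, sub_mul, Finset.sum_sub_distrib, ite_mul, Finset.sum_ite_mem]
  obtain ⟨i, hi⟩ : ∃ i, ¬(i ∈ I ↔ i ∈ J) := by simpa [Finset.ext_iff] using hIJ
  have hci : c i ≠ 0 := by by_cases hiI : i ∈ I <;> simp_all [c]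
  have := (hac i).nullSingletonClass
  refine measure_mono_null (fun ω hω => ?_) (hindep.measure_sum_mul_eq_zero hmeas c hci)
  change ∑ k, c k * X k ω = 0
  rw [hsum, sub_eq_zero]
  simpa [hIJ] using hω
end

section
/- For every C ≥ 0, the set S↓_C of all nonincreasing sequences x = (x_1, x_2, …) of nonnegative real numbers with ∑_{i=1}^∞ x_i ≤ C is compact with respect to the uniform metric d_Max(x,y) := sup_{i∈ℕ} |x_i − y_i|. -/
open Filter

lemma aux_bound {C : ℝ} {x : ℕ → ℝ} (hx0 : ∀ i, 0 ≤ x i)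
    (hanti : Antitone x) (hsum : ∀ n : ℕ, ∑ i ∈ Finset.range n, x i ≤ C)
    (n : ℕ) : (n + 1 : ℝ) * x n ≤ C := by
  have h1 : (Finset.range (n+1)).card • x n ≤ ∑ i ∈ Finset.range (n+1), x i :=
    Finset.card_nsmul_le_sum _ _ _ (fun i hi => hanti (Nat.lt_succ_iff.mp (Finset.mem_range.mp hi)))
  have := h1.trans (hsum (n+1))
  rw [Finset.card_range, nsmul_eq_mul] at this
  push_cast at this ⊢
  linarith

/-- For every `C ≥ 0`, the set `S↓_C` of nonincreasing nonnegative sequences with total sum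
at most `C` (expressed via partial sums) is compact in the topology of uniform convergence,
i.e. the topology induced by the uniform metric `d_Max`. -/
theorem stmt13 (C : ℝ) (hC : 0 ≤ C) :
    IsCompact {x : UniformFun ℕ ℝ |
      (∀ i, 0 ≤ UniformFun.toFun x i) ∧
      (∀ i, UniformFun.toFun x (i + 1) ≤ UniformFun.toFun x i) ∧
      (∀ n : ℕ, ∑ i ∈ Finset.range n, UniformFun.toFun x i ≤ C)} := by
  set K : Set (ℕ → ℝ) := {x | (∀ i, 0 ≤ x i) ∧ (∀ i, x (i + 1) ≤ x i) ∧
      (∀ n : ℕ, ∑ i ∈ Finset.range n, x i ≤ C)} with hKdef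
  -- K is compact in the product topology
  have hKsub : K ⊆ Set.pi Set.univ (fun _ : ℕ => Set.Icc (0:ℝ) C) := by
    rintro x ⟨h0, h2, h3⟩ i -
    refine ⟨h0 i, ?_⟩
    have hanti : Antitone x := antitone_nat_of_succ_le h2
    have := aux_bound h0 hanti h3 i
    nlinarith [h0 i, (Nat.cast_nonneg i : (0:ℝ) ≤ i)]
  have hKclosed : IsClosed K := by
    have : K = (⋂ i, {x : ℕ → ℝ | 0 ≤ x i}) ∩ ((⋂ i, {x : ℕ → ℝ | x (i+1) ≤ x i}) ∩
        ⋂ n, {x : ℕ → ℝ | ∑ i ∈ Finset.range n, x i ≤ C}) := by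
      ext x; simp [hKdef, forall_and]
    rw [this]
    refine (isClosed_iInter fun i => isClosed_le continuous_const (continuous_apply i)).inter
      ((isClosed_iInter fun i =>
        isClosed_le (continuous_apply (i+1)) (continuous_apply i)).inter
       (isClosed_iInter fun n => isClosed_le (by fun_prop) continuous_const))
  have hKcompact : IsCompact K :=
    (isCompact_univ_pi fun _ => isCompact_Icc).of_isClosed_subset hKclosed hKsub
  -- ofFun is continuous on K
  have hcont : ContinuousOn (UniformFun.ofFun : (ℕ → ℝ) → UniformFun ℕ ℝ) K := by
    intro x hx
    rw [ContinuousWithinAt,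
      (UniformFun.hasBasis_nhds_of_basis ℕ ℝ (UniformFun.ofFun x)
        Metric.uniformity_basis_dist).tendsto_right_iff]
    intro ε hε
    obtain ⟨N, hN⟩ := exists_nat_gt (C / ε)
    have hNε : C / (N + 1 : ℝ) < ε := by
      rw [div_lt_iff₀ (by positivity)]
      have : C / ε < (N:ℝ) + 1 := hN.trans (by linarith)
      calc C = (C / ε) * ε := by field_simp
        _ < ((N:ℝ) + 1) * ε := by
            exact mul_lt_mul_of_pos_right this hε
        _ = ε * ((N:ℝ) + 1) := by ring
    have hxbound : ∀ i : ℕ, N ≤ i → ∀ y ∈ K, y i < ε := by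
      rintro i hi y ⟨h0, h2, h3⟩
      have hanti : Antitone y := antitone_nat_of_succ_le h2
      have hb := aux_bound h0 hanti h3 N
      have : y N ≤ C / (N + 1 : ℝ) := by
        rw [le_div_iff₀ (by positivity)]; linarith
      exact lt_of_le_of_lt (le_trans (hanti hi) this) hNε
    have hU : IsOpen {y : ℕ → ℝ | ∀ i < N, dist (x i) (y i) < ε} := by
      have : {y : ℕ → ℝ | ∀ i < N, dist (x i) (y i) < ε}
          = ⋂ i ∈ Finset.range N, {y : ℕ → ℝ | dist (x i) (y i) < ε} := by
        ext y; simp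
      rw [this]
      exact isOpen_biInter_finset fun i _ =>
        isOpen_lt (by fun_prop) continuous_const
    rw [eventually_iff]
    refine mem_nhdsWithin.2 ⟨_, hU, fun i _ => by simp [dist_self, hε], ?_⟩
    rintro y ⟨hyU, hyK⟩ i
    simp only [UniformFun.gen, Set.mem_setOf_eq]
    by_cases hi : i < N
    · exact hyU i hi
    · push_neg at hi
      have h1 := hxbound i hi y hyK
      have h2 := hxbound i hi x hx
      have hy0 := hyK.1 i
      have hx0 := hx.1 i
      rw [Real.dist_eq, abs_sub_lt_iff]
      simp only [UniformFun.toFun_ofFun]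
      constructor <;> linarith
  -- transfer
  have himg : {x : UniformFun ℕ ℝ |
      (∀ i, 0 ≤ UniformFun.toFun x i) ∧
      (∀ i, UniformFun.toFun x (i + 1) ≤ UniformFun.toFun x i) ∧
      (∀ n : ℕ, ∑ i ∈ Finset.range n, UniformFun.toFun x i ≤ C)}
      = (UniformFun.ofFun : (ℕ → ℝ) → UniformFun ℕ ℝ) '' K := by
    ext z
    constructor
    · intro hz
      exact ⟨UniformFun.toFun z, hz, rfl⟩
    · rintro ⟨y, hy, rfl⟩
      exact hy
  rw [himg]
  exact hKcompact.image_of_continuousOn hcont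
end

section
/- Let (X,r,μ) be an ultra-metric measure space with compact support and assume (X,r,μ) is binary, i.e. for μ⊗μ⊗μ⊗μ-almost all quadruples (x₁,x₂,x₃,x₄) in X⁴, r(x₁,x₂) = r(x₃,x₄) implies (x₁ = x₃ and x₂ = x₄) or (x₁ = x₄ and x₂ = x₃). Then for every h > 0, every family of closed h-representatives (τ_i)_{i∈I} and every family of open h-representatives (τ'_j)_{j∈J}, the cardinality of J is at most the cardinality of I plus one. -/
/-!
In an ultrametric space two balls of the same radius are equal or disjoint, so the open
`h`-representative balls are pairwise disjoint and each of them, having positive mass, lies inside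
one of the closed `h`-representative balls. Two distinct open `h`-balls inside a common closed
`h`-ball are at distance exactly `h` from each other. Hence if the open balls `B j, B k` and
`B l, B m` form two such pairs with `l ∉ {j, k}`, every quadruple in `B j × B k × B l × B m` has
`r(x₁, x₂) = h = r(x₃, x₄)` while `x₃ ∉ {x₁, x₂}`; this set has positive mass, contradicting
binarity. So all pairs of open balls sharing a closed ball are one and the same pair, and mapping
every open ball to its closed ball is injective once one open ball is left out.
-/

open MeasureTheory Metric

/-- A family of open `h`-representatives: points of the support whose open `h`-balls are
pairwise `μ`-disjoint and together carry the total mass of `μ`. -/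
def IsOpenRepFamily {X : Type*} [MetricSpace X] [MeasurableSpace X]
    (μ : Measure X) (h : ℝ) {ι : Type*} (τ : ι → X) : Prop :=
  (∀ i, τ i ∈ msupp μ) ∧
  (∀ i j : ι, i ≠ j → μ (ball (τ i) h ∩ ball (τ j) h) = 0) ∧
  (∑' i, μ (ball (τ i) h) = μ Set.univ)

universe u

lemma Cardinal.mk_le_mk_add_one_of_injOn_compl_singleton {α β : Type u} (f : α → β) (a : α)
    (hf : Set.InjOn f {a}ᶜ) : Cardinal.mk α ≤ Cardinal.mk β + 1 :=
  calc Cardinal.mk α = Cardinal.mk (({a}ᶜ ∪ {a} : Set α)) := by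
        rw [Set.compl_union_self, Cardinal.mk_univ]
    _ ≤ Cardinal.mk ({a}ᶜ : Set α) + Cardinal.mk ({a} : Set α) := Cardinal.mk_union_le _ _
    _ ≤ Cardinal.mk β + 1 :=
        add_le_add (Cardinal.mk_le_of_injective hf.injective) (Cardinal.mk_singleton a).le

lemma IsUltrametricDist.dist_eq_of_mem_ball_of_notMem_ball {X : Type*} [PseudoMetricSpace X]
    [IsUltrametricDist X] {a c x y : X} {r : ℝ} (hx : x ∈ ball a r) (hy : y ∉ ball a r)
    (hxc : x ∈ closedBall c r) (hyc : y ∈ closedBall c r) : dist x y = r := by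
  refine le_antisymm ?_ (not_lt.mp fun hxy ↦ hy ?_)
  · exact (dist_triangle_max x c y).trans (max_le hxc (dist_comm c y ▸ hyc))
  · rw [ball_eq_of_mem hx]
    exact mem_ball_comm.mp hxy

def IsBinary {X : Type*} [Dist X] [MeasurableSpace X] (μ : Measure X) : Prop :=
  ∀ᵐ q ∂((μ.prod μ).prod (μ.prod μ)),
    dist q.1.1 q.1.2 = dist q.2.1 q.2.2 →
      (q.1.1 = q.2.1 ∧ q.1.2 = q.2.2) ∨ (q.1.1 = q.2.2 ∧ q.1.2 = q.2.1)

lemma IsBinary.measure_mul_eq_zero_of_dist_eq {X : Type*} [Dist X] [MeasurableSpace X]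
    {μ : Measure X} [SFinite μ] (hμ : IsBinary μ) {A B C D : Set X} {d : ℝ}
    (hAB : ∀ x ∈ A, ∀ y ∈ B, dist x y = d) (hCD : ∀ x ∈ C, ∀ y ∈ D, dist x y = d)
    (hAC : Disjoint A C) (hBC : Disjoint B C) : μ A * μ B * (μ C * μ D) = 0 := by
  rw [← Measure.prod_prod, ← Measure.prod_prod, ← Measure.prod_prod]
  refine measure_mono_null ?_ (ae_iff.mp hμ)
  rintro ⟨⟨x₁, x₂⟩, x₃, x₄⟩ ⟨⟨h₁, h₂⟩, h₃, h₄⟩ hq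
  rcases hq ((hAB _ h₁ _ h₂).trans (hCD _ h₃ _ h₄).symm) with ⟨h₁₃, -⟩ | ⟨-, h₂₃⟩
  · exact hAC.ne_of_mem h₁ h₃ h₁₃
  · exact hBC.ne_of_mem h₂ h₃ h₂₃

section Representatives

variable {X : Type*} [MetricSpace X] [MeasurableSpace X] {μ : Measure X} {h : ℝ}
  {ι : Type*} {τ : ι → X}

lemma IsClosedRepFamily.measure_compl_iUnion [OpensMeasurableSpace X] [IsFiniteMeasure μ]
    [Countable ι] (hτ : IsClosedRepFamily μ h τ) : μ (⋃ i, closedBall (τ i) h)ᶜ = 0 := by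
  have hU : μ (⋃ i, closedBall (τ i) h) = μ Set.univ :=
    (measure_iUnion₀ (fun i j hij ↦ hτ.2.1 i j hij)
      fun _ ↦ measurableSet_closedBall.nullMeasurableSet).trans hτ.2.2
  rw [measure_compl (MeasurableSet.iUnion fun _ ↦ measurableSet_closedBall) (measure_ne_top μ _),
    hU, tsub_self]

lemma IsClosedRepFamily.exists_ball_subset_closedBall [IsUltrametricDist X]
    [OpensMeasurableSpace X] [IsFiniteMeasure μ] [Countable ι] (hτ : IsClosedRepFamily μ h τ)
    {x : X} (hx : μ (ball x h) ≠ 0) : ∃ i, ball x h ⊆ closedBall (τ i) h := by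
  obtain ⟨y, hyx, hy⟩ : (ball x h ∩ ⋃ i, closedBall (τ i) h).Nonempty := by
    by_contra! hempty
    exact hx (measure_mono_null (Set.disjoint_iff_inter_eq_empty.mpr hempty).subset_compl_right
      hτ.measure_compl_iUnion)
  obtain ⟨i, hyi⟩ := Set.mem_iUnion.mp hy
  refine ⟨i, ball_subset_closedBall.trans ?_⟩
  rw [IsUltrametricDist.closedBall_eq_of_mem (ball_subset_closedBall hyx),
    IsUltrametricDist.closedBall_eq_of_mem hyi]

variable [IsUltrametricDist X]

lemma IsOpenRepFamily.pairwise_disjoint (hτ : IsOpenRepFamily μ h τ) (hh : 0 < h) :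
    Pairwise fun i j ↦ Disjoint (ball (τ i) h) (ball (τ j) h) := by
  intro i j hij
  refine (IsUltrametricDist.ball_eq_or_disjoint (τ i) (τ j) h).resolve_left fun heq ↦ ?_
  have hnull := hτ.2.1 i j hij
  rw [heq, Set.inter_self] at hnull
  exact (hτ.1 j h hh).ne' hnull

lemma IsOpenRepFamily.dist_eq_of_subset_closedBall (hτ : IsOpenRepFamily μ h τ) (hh : 0 < h)
    {j k : ι} {c : X} (hjk : j ≠ k) (hj : ball (τ j) h ⊆ closedBall c h)
    (hk : ball (τ k) h ⊆ closedBall c h) :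
    ∀ x ∈ ball (τ j) h, ∀ y ∈ ball (τ k) h, dist x y = h := fun _ hx _ hy ↦
  IsUltrametricDist.dist_eq_of_mem_ball_of_notMem_ball hx
    ((hτ.pairwise_disjoint hh hjk).notMem_of_mem_right hy) (hj hx) (hk hy)

lemma IsOpenRepFamily.eq_or_eq_of_subset_closedBall [SFinite μ] (hτ : IsOpenRepFamily μ h τ)
    (hh : 0 < h) (hμ : IsBinary μ) {j k l m : ι} {c c' : X}
    (hjk : j ≠ k) (hj : ball (τ j) h ⊆ closedBall c h) (hk : ball (τ k) h ⊆ closedBall c h)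
    (hlm : l ≠ m) (hl : ball (τ l) h ⊆ closedBall c' h) (hm : ball (τ m) h ⊆ closedBall c' h) :
    l = j ∨ l = k := by
  by_contra! ⟨hlj, hlk⟩
  have hpos : ∀ i, μ (ball (τ i) h) ≠ 0 := fun i ↦ (hτ.1 i h hh).ne'
  refine mul_ne_zero (mul_ne_zero (hpos j) (hpos k)) (mul_ne_zero (hpos l) (hpos m)) ?_
  exact hμ.measure_mul_eq_zero_of_dist_eq (hτ.dist_eq_of_subset_closedBall hh hjk hj hk)
    (hτ.dist_eq_of_subset_closedBall hh hlm hl hm)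
    (hτ.pairwise_disjoint hh hlj.symm) (hτ.pairwise_disjoint hh hlk.symm)

end Representatives

theorem stmt16_general {X : Type*} [MetricSpace X] [MeasurableSpace X] [BorelSpace X]
    (hultra : ∀ x y z : X, dist x y ≤ max (dist x z) (dist z y))
    (μ : Measure X) [IsFiniteMeasure μ]
    (hbin : ∀ᵐ q ∂((μ.prod μ).prod (μ.prod μ)),
      dist q.1.1 q.1.2 = dist q.2.1 q.2.2 →
        (q.1.1 = q.2.1 ∧ q.1.2 = q.2.2) ∨ (q.1.1 = q.2.2 ∧ q.1.2 = q.2.1))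
    (h : ℝ) (hh : 0 < h)
    {ιc ιo : Type} [Countable ιc]
    (τ : ιc → X) (τ' : ιo → X)
    (hτ : IsClosedRepFamily μ h τ) (hτ' : IsOpenRepFamily μ h τ') :
    Cardinal.mk ιo ≤ Cardinal.mk ιc + 1 := by
  have : IsUltrametricDist X := ⟨fun x y z ↦ hultra x z y⟩
  choose g hg using fun j ↦ hτ.exists_ball_subset_closedBall (hτ'.1 j h hh).ne'
  by_cases hinj : Function.Injective g
  · exact (Cardinal.mk_le_of_injective hinj).trans le_self_add
  obtain ⟨j, k, hgjk, hjk⟩ : ∃ j k, g j = g k ∧ j ≠ k := by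
    simpa [Function.Injective] using hinj
  have hk : ball (τ' k) h ⊆ closedBall (τ (g j)) h := hgjk ▸ hg k
  refine Cardinal.mk_le_mk_add_one_of_injOn_compl_singleton g j fun l hl m hm hglm ↦ ?_
  by_contra hlm
  have hm' : ball (τ' m) h ⊆ closedBall (τ (g l)) h := hglm ▸ hg m
  have hl' : ball (τ' l) h ⊆ closedBall (τ (g m)) h := hglm.symm ▸ hg l
  rcases hτ'.eq_or_eq_of_subset_closedBall hh hbin hjk (hg j) hk hlm (hg l) hm' with rfl | rfl
  · exact hl rfl
  rcases hτ'.eq_or_eq_of_subset_closedBall hh hbin hjk (hg j) hk (Ne.symm hlm) (hg m) hl' with rfl | rfl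
  · exact hm rfl
  · exact hlm rfl

/-- In a binary ultra-metric measure space with compact support, for every `h > 0` the
number of open `h`-representatives exceeds the number of closed `h`-representatives by at
most one. -/
theorem stmt16 {X : Type*} [MetricSpace X] [CompleteSpace X]
    [TopologicalSpace.SeparableSpace X] [MeasurableSpace X] [BorelSpace X]
    (hultra : ∀ x y z : X, dist x y ≤ max (dist x z) (dist z y))
    (μ : Measure X) [IsFiniteMeasure μ]
    (hcomp : IsCompact (msupp μ))
    (hbin : ∀ᵐ q ∂((μ.prod μ).prod (μ.prod μ)),
      dist q.1.1 q.1.2 = dist q.2.1 q.2.2 →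
        (q.1.1 = q.2.1 ∧ q.1.2 = q.2.2) ∨ (q.1.1 = q.2.2 ∧ q.1.2 = q.2.1))
    (h : ℝ) (hh : 0 < h)
    {ιc ιo : Type} [Countable ιc] [Countable ιo]
    (τ : ιc → X) (τ' : ιo → X)
    (hτ : IsClosedRepFamily μ h τ) (hτ' : IsOpenRepFamily μ h τ') :
    Cardinal.mk ιo ≤ Cardinal.mk ιc + 1 :=
  stmt16_general hultra μ hbin h hh τ τ' hτ hτ'
end

section
/- Let x, y, z be real numbers with x ≥ y > 0, z > 0 and z ≤ x + y, and set b₀ := x² + y² + z², b₁ := (x+y)² + z² and b₂ := (x+y+z)². Then x = (√(2·√b₂·√(2b₁−b₂) + 2b₁) + √(2·√b₂·√(2b₁−b₂) + 8b₀ − 6b₁))/4, y = (√(2·√b₂·√(2b₁−b₂) + 2b₁) − √(2·√b₂·√(2b₁−b₂) + 8b₀ − 6b₁))/4, and z = (√b₂ − √(2b₁−b₂))/2; in particular, (x,y,z) is uniquely determined by (b₀,b₁,b₂) among triples satisfying these constraints. -/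
/-- Reconstruction of a triple `(x,y,z)` with `x ≥ y > 0`, `z > 0`, `z ≤ x + y` from the
quantities `b₀ = x² + y² + z²`, `b₁ = (x+y)² + z²` and `b₂ = (x+y+z)²`; in particular
`(x,y,z)` is uniquely determined by `(b₀,b₁,b₂)` among such triples. -/
theorem stmt17 (x y z : ℝ) (hyx : y ≤ x) (hy : 0 < y) (hz : 0 < z) (hzxy : z ≤ x + y)
    (b0 b1 b2 : ℝ)
    (hb0 : b0 = x ^ 2 + y ^ 2 + z ^ 2)
    (hb1 : b1 = (x + y) ^ 2 + z ^ 2)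
    (hb2 : b2 = (x + y + z) ^ 2) :
    x = (Real.sqrt (2 * Real.sqrt b2 * Real.sqrt (2 * b1 - b2) + 2 * b1)
          + Real.sqrt (2 * Real.sqrt b2 * Real.sqrt (2 * b1 - b2) + 8 * b0 - 6 * b1)) / 4 ∧
    y = (Real.sqrt (2 * Real.sqrt b2 * Real.sqrt (2 * b1 - b2) + 2 * b1)
          - Real.sqrt (2 * Real.sqrt b2 * Real.sqrt (2 * b1 - b2) + 8 * b0 - 6 * b1)) / 4 ∧
    z = (Real.sqrt b2 - Real.sqrt (2 * b1 - b2)) / 2 := by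
  have h2 : Real.sqrt b2 = x + y + z := by
    rw [hb2]; exact Real.sqrt_sq (by linarith)
  have h1 : Real.sqrt (2 * b1 - b2) = x + y - z := by
    have : 2 * b1 - b2 = (x + y - z) ^ 2 := by rw [hb1, hb2]; ring
    rw [this]; exact Real.sqrt_sq (by linarith)
  have hA : Real.sqrt (2 * Real.sqrt b2 * Real.sqrt (2 * b1 - b2) + 2 * b1)
      = 2 * (x + y) := by
    have : 2 * Real.sqrt b2 * Real.sqrt (2 * b1 - b2) + 2 * b1 = (2 * (x + y)) ^ 2 := by
      rw [h1, h2, hb1]; ring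
    rw [this]; exact Real.sqrt_sq (by linarith)
  have hB : Real.sqrt (2 * Real.sqrt b2 * Real.sqrt (2 * b1 - b2) + 8 * b0 - 6 * b1)
      = 2 * (x - y) := by
    have : 2 * Real.sqrt b2 * Real.sqrt (2 * b1 - b2) + 8 * b0 - 6 * b1
        = (2 * (x - y)) ^ 2 := by rw [h1, h2, hb0, hb1]; ring
    rw [this]; exact Real.sqrt_sq (by linarith)
  refine ⟨by rw [hA, hB]; ring, by rw [hA, hB]; ring, by rw [h1, h2]; ring⟩
end
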